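/- Let X = [0,1] with the Euclidean metric and let F = ([0,1/2] × {0}) ∪ ([1/2,1] × {1}) ∪ ({1} × [0,1]) ⊆ X × X. Then the CR-dynamical system (X,F) has the specification property (SP) but does not have the Hausdorff specification property (HSP). -/
import Mathlib


/-- Iterated images of a point under a relation `F ⊆ X × X`:
`relIter F 0 x = {x}` and `relIter F (n+1) x = ⋃ z ∈ relIter F n x, F(z)`. -/
def relIter {X : Type*} (F : Set (X × X)) : ℕ → X → Set X
  | 0, x => {x}
  | n + 1, x => {y | ∃ z ∈ relIter F n x, (z, y) ∈ F}

/-- The distance between two sets: `inf {dist a b | a ∈ A, b ∈ B}`. -/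
noncomputable def setDist {X : Type*} [MetricSpace X] (A B : Set X) : ℝ :=
  sInf (Set.image2 dist A B)

/-- The specification property (`SP`) for a CR-dynamical system `(X, F)`. -/
def CRSpec {X : Type*} [MetricSpace X] (F : Set (X × X)) : Prop :=
  ∀ ε : ℝ, 0 < ε → ∃ N : ℕ, 0 < N ∧
    ∀ (n : ℕ) (x : ℕ → X) (k ℓ : ℕ → ℕ),
      (∀ i, i < n → k i ≤ ℓ i) →
      (∀ i, i + 1 < n → ℓ i + N ≤ k (i + 1)) →
      ∃ y : X, ∀ i, i < n → ∀ j, k i ≤ j → j ≤ ℓ i →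
        setDist (relIter F j y) (relIter F j (x i)) ≤ ε

/-- The Hausdorff specification property (`HSP`) for a CR-dynamical system
`(X, F)`. -/
def CRHSpec {X : Type*} [MetricSpace X] (F : Set (X × X)) : Prop :=
  ∀ ε : ℝ, 0 < ε → ∃ N : ℕ, 0 < N ∧
    ∀ (n : ℕ) (x : ℕ → X) (k ℓ : ℕ → ℕ),
      (∀ i, i < n → k i ≤ ℓ i) →
      (∀ i, i + 1 < n → ℓ i + N ≤ k (i + 1)) →
      ∃ y : X, ∀ i, i < n → ∀ j, k i ≤ j → j ≤ ℓ i →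
        Metric.hausdorffDist (relIter F j y) (relIter F j (x i)) ≤ ε

/-- The initial specification property (`ISP`) for a CR-dynamical system
`(X, F)`. -/
def CRInitSpec {X : Type*} [MetricSpace X] (F : Set (X × X)) : Prop :=
  ∀ ε : ℝ, 0 < ε → ∃ N : ℕ, 0 < N ∧
    ∀ (n : ℕ), 1 ≤ n → ∀ (x : ℕ → X) (ℓ m : ℕ → ℕ),
      (∀ i, i + 1 < n → N ≤ m i) →
      ∃ y : X, ∀ i, i < n → ∀ j, j ≤ ℓ i →
        setDist (relIter F ((∑ t ∈ Finset.range i, (ℓ t + m t)) + j) y)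
          (relIter F j (x i)) ≤ ε

/-- The Hausdorff initial specification property (`HISP`) for a CR-dynamical
system `(X, F)`. -/
def CRHInitSpec {X : Type*} [MetricSpace X] (F : Set (X × X)) : Prop :=
  ∀ ε : ℝ, 0 < ε → ∃ N : ℕ, 0 < N ∧
    ∀ (n : ℕ), 1 ≤ n → ∀ (x : ℕ → X) (ℓ m : ℕ → ℕ),
      (∀ i, i + 1 < n → N ≤ m i) →
      ∃ y : X, ∀ i, i < n → ∀ j, j ≤ ℓ i →
        Metric.hausdorffDist
          (relIter F ((∑ t ∈ Finset.range i, (ℓ t + m t)) + j) y)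
          (relIter F j (x i)) ≤ ε

/-- The closed relation
`F = ([0,1/2] × {0}) ∪ ([1/2,1] × {1}) ∪ ({1} × [0,1])` on `X = [0,1]`. -/
def exampleRel : Set (Set.Icc (0 : ℝ) 1 × Set.Icc (0 : ℝ) 1) :=
  {p | (p.1.1 ≤ 1 / 2 ∧ p.2.1 = 0) ∨ (1 / 2 ≤ p.1.1 ∧ p.2.1 = 1) ∨ p.1.1 = 1}

section ExampleHelpers

open Metric Set

/-- The point `0` of `[0,1]`. -/
def pt0 : Set.Icc (0 : ℝ) 1 := ⟨0, by norm_num⟩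

/-- The point `1` of `[0,1]`. -/
def pt1 : Set.Icc (0 : ℝ) 1 := ⟨1, by norm_num⟩

lemma rel_to_pt0 (x : Set.Icc (0:ℝ) 1) (h : x.1 ≤ 1/2) : (x, pt0) ∈ exampleRel :=
  Or.inl ⟨h, rfl⟩

lemma rel_to_pt1 (x : Set.Icc (0:ℝ) 1) (h : 1/2 ≤ x.1) : (x, pt1) ∈ exampleRel :=
  Or.inr (Or.inl ⟨h, rfl⟩)

lemma rel_from_pt1 (y : Set.Icc (0:ℝ) 1) : (pt1, y) ∈ exampleRel :=
  Or.inr (Or.inr rfl)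

lemma rel_from_small (y w : Set.Icc (0:ℝ) 1) (hy : y.1 < 1/2) :
    (y, w) ∈ exampleRel ↔ w = pt0 := by
  constructor
  · rintro (⟨-, h⟩ | ⟨h, -⟩ | h)
    · exact Subtype.ext h
    · linarith
    · linarith
  · rintro rfl; exact rel_to_pt0 y hy.le

lemma relIter_nonempty (n : ℕ) (x : Set.Icc (0:ℝ) 1) :
    (relIter exampleRel n x).Nonempty := by
  induction n with
  | zero => exact ⟨x, rfl⟩
  | succ n ih =>
    obtain ⟨z, hz⟩ := ih
    rcases le_total z.1 (1/2) with h | h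
    · exact ⟨pt0, z, hz, rel_to_pt0 z h⟩
    · exact ⟨pt1, z, hz, rel_to_pt1 z h⟩

lemma pt0_mem_relIter (n : ℕ) (hn : 2 ≤ n) (x : Set.Icc (0:ℝ) 1) :
    pt0 ∈ relIter exampleRel n x := by
  obtain ⟨m, rfl⟩ : ∃ m, n = m + 2 := ⟨n - 2, by omega⟩
  induction m with
  | zero =>
    have h1 : pt0 ∈ relIter exampleRel 1 x ∨ pt1 ∈ relIter exampleRel 1 x := by
      rcases le_total x.1 (1/2) with h | h
      · exact Or.inl ⟨x, rfl, rel_to_pt0 x h⟩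
      · exact Or.inr ⟨x, rfl, rel_to_pt1 x h⟩
    rcases h1 with h | h
    · exact ⟨pt0, h, rel_to_pt0 pt0 (by norm_num [pt0])⟩
    · exact ⟨pt1, h, rel_from_pt1 pt0⟩
  | succ m ih =>
    exact ⟨pt0, ih (by omega), rel_to_pt0 pt0 (by norm_num [pt0])⟩

lemma setDist_le_dist {A B : Set (Set.Icc (0:ℝ) 1)} {a b : Set.Icc (0:ℝ) 1}
    (ha : a ∈ A) (hb : b ∈ B) : setDist A B ≤ dist a b := by
  apply csInf_le
  · refine ⟨0, ?_⟩
    rintro r ⟨a', -, b', -, rfl⟩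
    exact dist_nonneg
  · exact ⟨a, ha, b, hb, rfl⟩

lemma relIter_small (y : Set.Icc (0:ℝ) 1) (hy : y.1 < 1/2) (n : ℕ) :
    relIter exampleRel (n + 1) y = {pt0} := by
  induction n with
  | zero =>
    ext w
    constructor
    · rintro ⟨z, hz, hzw⟩
      rw [show relIter exampleRel 0 y = {y} from rfl, Set.mem_singleton_iff] at hz
      subst hz
      exact (rel_from_small _ w hy).mp hzw
    · rintro rfl
      exact ⟨y, rfl, rel_to_pt0 y hy.le⟩
  | succ n ih =>
    ext w
    constructor
    · rintro ⟨z, hz, hzw⟩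
      rw [ih, Set.mem_singleton_iff] at hz
      subst hz
      exact (rel_from_small pt0 w (by norm_num [pt0])).mp hzw
    · rintro rfl
      exact ⟨pt0, by rw [ih]; rfl, rel_to_pt0 pt0 (by norm_num [pt0])⟩

lemma relIter_pt1 (n : ℕ) : relIter exampleRel (n + 1) pt1 = Set.univ := by
  induction n with
  | zero =>
    refine Set.eq_univ_iff_forall.mpr fun w => ⟨pt1, rfl, rel_from_pt1 w⟩
  | succ n ih =>
    refine Set.eq_univ_iff_forall.mpr fun w => ⟨pt1, ?_, rel_from_pt1 w⟩
    rw [ih]; trivial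

lemma hEdist_ne_top {A B : Set (Set.Icc (0:ℝ) 1)} (hA : A.Nonempty) (hB : B.Nonempty) :
    EMetric.hausdorffEdist A B ≠ ⊤ := by
  have : CompactSpace (Set.Icc (0:ℝ) 1) := isCompact_iff_compactSpace.mp isCompact_Icc
  exact Metric.hausdorffEdist_ne_top_of_nonempty_of_bounded hA hB
    (Bornology.IsBounded.subset isCompact_univ.isBounded (Set.subset_univ A))
    (Bornology.IsBounded.subset isCompact_univ.isBounded (Set.subset_univ B))

end ExampleHelpers

/-- With `X = [0,1]` and
`F = ([0,1/2] × {0}) ∪ ([1/2,1] × {1}) ∪ ({1} × [0,1])`, the CR-dynamical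
system `(X, F)` has the specification property (SP) but not the Hausdorff
specification property (HSP). -/
theorem exampleRel_crSpec_not_crHSpec :
    CRSpec exampleRel ∧ ¬ CRHSpec exampleRel := by
  constructor
  · -- SP: trace with y = x 0
    intro ε hε
    refine ⟨2, by norm_num, fun n x k ℓ hkl hgap => ⟨x 0, fun i hi j hkj hjl => ?_⟩⟩
    rcases Nat.eq_zero_or_pos i with rfl | hipos
    · obtain ⟨a, ha⟩ := relIter_nonempty j (x 0)
      calc setDist (relIter exampleRel j (x 0)) (relIter exampleRel j (x 0))
          ≤ dist a a := setDist_le_dist ha ha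
        _ ≤ ε := by rw [dist_self]; exact hε.le
    · have h2 : 2 ≤ j := by
        obtain ⟨i', rfl⟩ : ∃ i', i = i' + 1 := ⟨i - 1, by omega⟩
        have := hgap i' (by omega)
        omega
      calc setDist (relIter exampleRel j (x 0)) (relIter exampleRel j (x i))
          ≤ dist pt0 pt0 :=
            setDist_le_dist (pt0_mem_relIter j h2 (x 0)) (pt0_mem_relIter j h2 (x i))
        _ ≤ ε := by rw [dist_self]; exact hε.le
  · -- not HSP
    intro h
    obtain ⟨N, hN, hspec⟩ := h (1/4) (by norm_num)
    obtain ⟨y, hy⟩ := hspec 2 (fun i => if i = 0 then pt0 else pt1)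
      (fun i => if i = 0 then 0 else N) (fun i => if i = 0 then 0 else N)
      (fun i _ => le_rfl) (fun i hi => by obtain rfl : i = 0 := (by omega); simp)
    have h0 := hy 0 (by norm_num) 0 le_rfl le_rfl
    norm_num at h0
    -- h0 : hausdorffDist {y} {pt0} ≤ 1/4
    have hy14 : y.1 ≤ 1/4 := by
      have hle : dist y pt0 ≤ 1/4 := by
        have := Metric.infDist_le_hausdorffDist_of_mem
          (show y ∈ relIter exampleRel 0 y from rfl)
          (hEdist_ne_top (relIter_nonempty 0 y) (relIter_nonempty 0 pt0))
        rw [show relIter exampleRel 0 pt0 = {pt0} from rfl, Metric.infDist_singleton] at this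
        exact this.trans h0
      rw [Subtype.dist_eq, Real.dist_eq] at hle
      have := abs_le.mp hle
      simpa [pt0] using this.2
    have h1 := hy 1 (by norm_num) N le_rfl le_rfl
    norm_num at h1
    obtain ⟨M, rfl⟩ : ∃ M, N = M + 1 := ⟨N - 1, by omega⟩
    rw [relIter_small y (by simpa using hy14.trans_lt (by norm_num)) M, relIter_pt1 M] at h1
    have hcontra : (1:ℝ) ≤ 1/4 := by
      have := Metric.infDist_le_hausdorffDist_of_mem (Set.mem_univ pt1)
        (hEdist_ne_top (⟨pt1, trivial⟩ : (Set.univ : Set (Set.Icc (0:ℝ) 1)).Nonempty) (⟨pt0, rfl⟩ : ({pt0} : Set (Set.Icc (0:ℝ) 1)).Nonempty))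
      rw [Metric.infDist_singleton, Subtype.dist_eq, Real.dist_eq,
        show (pt1.1 : ℝ) = 1 from rfl, show (pt0.1 : ℝ) = 0 from rfl] at this
      rw [Metric.hausdorffDist_comm] at h1
      calc (1:ℝ) = |1 - 0| := by norm_num
        _ ≤ Metric.hausdorffDist (Set.univ : Set (Set.Icc (0:ℝ) 1)) {pt0} := this
        _ ≤ 1/4 := h1
    linarith
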